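/- If (⊗ₙ P⁽ⁿ⁾)Σ = Σ for a tensor Σ whose mode-n unfolding Σ_{(n)} has full row rank I_n, and each P⁽ⁿ⁾ is unitary, then each P⁽ⁿ⁾ commutes with Σ_{(n)} Σ_{(n)}*; in particular P⁽ⁿ⁾ preserves each eigenspace of the n-th reduced density matrix. -/

import Mathlib

/-!
Unfolding along mode `n` turns `(⊗ₘ P⁽ᵐ⁾) Σ = Σ` into `Σ_{(n)} = P⁽ⁿ⁾ Σ_{(n)} Qᵀ`, where `Q` is the
Kronecker product of the remaining `P⁽ᵏ⁾` and hence unitary. Then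
`Σ_{(n)} Σ_{(n)}* = P⁽ⁿ⁾ (Σ_{(n)} Σ_{(n)}*) P⁽ⁿ⁾*`, which is the commutation relation.
-/

open Matrix BigOperators

noncomputable section

/-- The full Kronecker (tensor) product `⊗ₙ U⁽ⁿ⁾` of the local matrices, as a matrix
on the product index set. -/
def kronFull {N : ℕ} {I : Fin N → ℕ} (U : ∀ n, Matrix (Fin (I n)) (Fin (I n)) ℂ) :
    Matrix (∀ n, Fin (I n)) (∀ n, Fin (I n)) ℂ :=
  Matrix.of fun x y => ∏ n, U n (x n) (y n)

/-- The action of a local operator `⊗ₙ U⁽ⁿ⁾` on a tensor `T ∈ ℂ^{I₁}⊗⋯⊗ℂ^{I_N}`. -/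
def locAct {N : ℕ} {I : Fin N → ℕ} (U : ∀ n, Matrix (Fin (I n)) (Fin (I n)) ℂ)
    (T : (∀ n, Fin (I n)) → ℂ) : (∀ n, Fin (I n)) → ℂ :=
  fun x => ∑ y : ∀ n, Fin (I n), (∏ n, U n (x n) (y n)) * T y

/-- Assemble a full multi-index from the value `i` of the `n`-th index and the values
`c` of the remaining indices. -/
def assemble {N : ℕ} {I : Fin N → ℕ} (n : Fin N) (i : Fin (I n))
    (c : ∀ k : {k : Fin N // k ≠ n}, Fin (I k.1)) : ∀ m, Fin (I m) :=
  fun m => if h : m = n then cast (show Fin (I n) = Fin (I m) by rw [h]) i else c ⟨m, h⟩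

/-- The mode-`n` matrix unfolding of a tensor (columns indexed by the remaining indices). -/
def unfold {N : ℕ} {I : Fin N → ℕ} (n : Fin N) (T : (∀ m, Fin (I m)) → ℂ) :
    Matrix (Fin (I n)) (∀ k : {k : Fin N // k ≠ n}, Fin (I k.1)) ℂ :=
  Matrix.of fun i c => T (assemble n i c)

/-- The Hermitian inner product `⟨T_{i_n=i}, T'_{i_n=j}⟩` of mode-`n` slices. -/
def modeInner {N : ℕ} {I : Fin N → ℕ} (n : Fin N) (T T' : (∀ m, Fin (I m)) → ℂ)
    (i j : Fin (I n)) : ℂ :=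
  ∑ c : ∀ k : {k : Fin N // k ≠ n}, Fin (I k.1),
    star (T (assemble n i c)) * T' (assemble n j c)

/-- `T` is all-orthogonal with ordered mode-`n` singular values `σ n`. -/
def AllOrth {N : ℕ} {I : Fin N → ℕ} (σ : ∀ n, Fin (I n) → ℝ)
    (T : (∀ m, Fin (I m)) → ℂ) : Prop :=
  (∀ n, Antitone (σ n)) ∧ (∀ n i, 0 ≤ σ n i) ∧
    ∀ n i j, modeInner n T T i j = if i = j then ((σ n i : ℂ)) ^ 2 else 0

/-- Squared Frobenius norm of a tensor. -/
def fnormSq {N : ℕ} {I : Fin N → ℕ} (T : (∀ m, Fin (I m)) → ℂ) : ℝ :=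
  ∑ x, Complex.normSq (T x)

theorem Matrix.commute_mul_conjTranspose_of_eq_mul_mul {m n α : Type*} [Fintype m] [Fintype n]
    [DecidableEq m] [DecidableEq n] [CommRing α] [StarRing α] {A : Matrix m n α}
    {U : Matrix m m α} {V : Matrix n n α} (hU : U ∈ unitaryGroup m α) (hV : V ∈ unitaryGroup n α)
    (h : A = U * A * V) : Commute U (A * Aᴴ) := by
  have hUU : Uᴴ * U = 1 := mem_unitaryGroup_iff'.mp hU
  have hVV : V * Vᴴ = 1 := mem_unitaryGroup_iff.mp hV
  have hconj : A * Aᴴ = U * (A * Aᴴ) * Uᴴ := by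
    conv_lhs => rw [h]
    simp only [conjTranspose_mul, Matrix.mul_assoc]
    rw [← Matrix.mul_assoc V, hVV, Matrix.one_mul]
  calc U * (A * Aᴴ) = U * (A * Aᴴ) * (Uᴴ * U) := by rw [hUU, Matrix.mul_one]
    _ = U * (A * Aᴴ) * Uᴴ * U := by simp only [Matrix.mul_assoc]
    _ = A * Aᴴ * U := by rw [← hconj]

section piKron

variable {ι R : Type*} [Fintype ι] {κ : ι → Type*}

def Matrix.piKron [CommSemiring R] (A : ∀ i, Matrix (κ i) (κ i) R) :
    Matrix (∀ i, κ i) (∀ i, κ i) R :=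
  of fun x y => ∏ i, A i (x i) (y i)

theorem Matrix.piKron_mul [DecidableEq ι] [∀ i, Fintype (κ i)] [CommSemiring R]
    (A B : ∀ i, Matrix (κ i) (κ i) R) :
    piKron A * piKron B = piKron fun i => A i * B i := by
  ext x y
  simp only [piKron, mul_apply, of_apply, Fintype.prod_sum, Finset.prod_mul_distrib]

theorem Matrix.piKron_one [DecidableEq ι] [∀ i, DecidableEq (κ i)] [CommSemiring R] :
    piKron (fun i => (1 : Matrix (κ i) (κ i) R)) = 1 := by
  ext x y
  by_cases hxy : x = y
  · subst hxy
    simp [piKron]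
  · obtain ⟨i, hi⟩ := Function.ne_iff.mp hxy
    rw [one_apply_ne hxy, piKron, of_apply]
    exact Finset.prod_eq_zero (Finset.mem_univ i) (one_apply_ne hi)

theorem Matrix.piKron_conjTranspose [CommSemiring R] [StarRing R]
    (A : ∀ i, Matrix (κ i) (κ i) R) : (piKron A)ᴴ = piKron fun i => (A i)ᴴ := by
  ext x y
  simp [piKron, star_prod]

theorem Matrix.piKron_mem_unitaryGroup [DecidableEq ι] [∀ i, Fintype (κ i)]
    [∀ i, DecidableEq (κ i)] [CommRing R] [StarRing R]
    {U : ∀ i, Matrix (κ i) (κ i) R} (hU : ∀ i, U i ∈ unitaryGroup (κ i) R) :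
    piKron U ∈ unitaryGroup (∀ i, κ i) R := by
  rw [mem_unitaryGroup_iff', star_eq_conjTranspose, piKron_conjTranspose, piKron_mul,
    ← piKron_one]
  exact congrArg piKron (funext fun i => mem_unitaryGroup_iff'.mp (hU i))

end piKron

section unfold

variable {N : ℕ} {I : Fin N → ℕ}

theorem assemble_eq_piSplitAt_symm (n : Fin N) (i : Fin (I n))
    (c : ∀ k : {k : Fin N // k ≠ n}, Fin (I k.1)) :
    assemble n i c = (Equiv.piSplitAt n fun m => Fin (I m)).symm (i, c) := by
  funext m
  by_cases h : m = n
  · subst h; simp [assemble, Equiv.piSplitAt]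
  · simp [assemble, Equiv.piSplitAt, h]

theorem prod_apply_assemble (U : ∀ n, Matrix (Fin (I n)) (Fin (I n)) ℂ) (n : Fin N)
    (i j : Fin (I n)) (c d : ∀ k : {k : Fin N // k ≠ n}, Fin (I k.1)) :
    ∏ m, U m (assemble n i c m) (assemble n j d m) = U n i j * ∏ k, U k.1 (c k) (d k) := by
  rw [Fintype.prod_eq_mul_prod_subtype_ne _ n]
  congr 1
  · simp [assemble]
  · exact Finset.prod_congr rfl fun k _ => by simp [assemble, k.2]

theorem unfold_locAct (P : ∀ n, Matrix (Fin (I n)) (Fin (I n)) ℂ) (T : (∀ n, Fin (I n)) → ℂ)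
    (n : Fin N) :
    unfold n (locAct P T) =
      P n * unfold n T * (piKron fun k : {k : Fin N // k ≠ n} => P k.1)ᵀ := by
  ext i c
  let e := (Equiv.piSplitAt n fun m => Fin (I m)).symm
  calc unfold n (locAct P T) i c
      = ∑ p, (∏ m, P m (assemble n i c m) (e p m)) * T (e p) :=
        (e.sum_comp fun y => (∏ m, P m (assemble n i c m) (y m)) * T y).symm
    _ = ∑ d, ∑ j, P n i j * unfold n T j d * piKron (fun k => P k.1) c d := by
        simp only [e, ← assemble_eq_piSplitAt_symm, Fintype.sum_prod_type, prod_apply_assemble]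
        rw [Finset.sum_comm]
        simp only [unfold, piKron, of_apply]
        exact Finset.sum_congr rfl fun d _ => Finset.sum_congr rfl fun j _ => by ring
    _ = _ := by simp only [mul_apply, transpose_apply, Finset.sum_mul]

end unfold

theorem stmt19_general {N : ℕ} {I : Fin N → ℕ} (T : (∀ n, Fin (I n)) → ℂ)
    (P : ∀ n, Matrix (Fin (I n)) (Fin (I n)) ℂ)
    (hP : ∀ n, P n ∈ Matrix.unitaryGroup (Fin (I n)) ℂ)
    (hstab : locAct P T = T) :
    ∀ n : Fin N, P n * (unfold n T * (unfold n T)ᴴ) =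
      (unfold n T * (unfold n T)ᴴ) * P n := by
  intro n
  have hQ : (piKron fun k : {k : Fin N // k ≠ n} => P k.1)ᵀ ∈ unitaryGroup _ ℂ :=
    transpose_mem_unitaryGroup_iff.mpr (piKron_mem_unitaryGroup fun k => hP k.1)
  refine (commute_mul_conjTranspose_of_eq_mul_mul (hP n) hQ ?_).eq
  rw [← unfold_locAct, hstab]

/-- If the local unitary `⊗ₙ P⁽ⁿ⁾` stabilizes `Σ` and every mode-`n` unfolding
has full row rank, then each `P⁽ⁿ⁾` commutes with `Σ_{(n)} Σ_{(n)}*` (hence preserves each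
eigenspace of the `n`-th reduced density matrix). -/
theorem stmt19 {N : ℕ} {I : Fin N → ℕ} (T : (∀ n, Fin (I n)) → ℂ)
    (P : ∀ n, Matrix (Fin (I n)) (Fin (I n)) ℂ)
    (hP : ∀ n, P n ∈ Matrix.unitaryGroup (Fin (I n)) ℂ)
    (hstab : locAct P T = T)
    (hrank : ∀ n, (unfold n T).rank = I n) :
    ∀ n : Fin N, P n * (unfold n T * (unfold n T)ᴴ) =
      (unfold n T * (unfold n T)ᴴ) * P n :=
  stmt19_general T P hP hstab
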